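/- arXiv:1903.10636 — 4 statements merged into one kernel-verified Lean document; each statement's English description precedes it below -/
import Mathlib

section
/- Let B be a finite family of pairwise distinct nonempty subsets of an m-element set, and let N be a natural number with Σ_{b ∈ B} |b| ≤ N. Let i_max = max{k ∈ ℕ : Σ_{i=1}^{k} i·C(m,i) ≤ N}. Then |B| ≤ Σ_{i=1}^{i_max} C(m,i) + ⌊(N − Σ_{i=1}^{i_max} i·C(m,i))/(i_max + 1)⌋. -/
/-- `i_max = max {k : Σ_{i=1}^k i·C(m,i) ≤ N}`.  Since `C(m,i) = 0` for `i > m`,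
the partial sums are constant beyond `k = m`, so the maximum is realized within
`{0, …, m}` and may be computed by `Nat.findGreatest` with bound `m`. -/
def imax (m N : ℕ) : ℕ :=
  Nat.findGreatest (fun k => ∑ i ∈ Finset.Icc 1 k, i * m.choose i ≤ N) m

/-- The counting bound
`Σ_{i=1}^{i_max} C(m,i) + ⌊(N − Σ_{i=1}^{i_max} i·C(m,i)) / (i_max + 1)⌋`
(natural subtraction and division, which agree with the intended values since
`Σ_{i=1}^{i_max} i·C(m,i) ≤ N` by definition of `i_max`). -/
def boundFormula (m N : ℕ) : ℕ :=
  (∑ i ∈ Finset.Icc 1 (imax m N), m.choose i) +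
    (N - ∑ i ∈ Finset.Icc 1 (imax m N), i * m.choose i) / (imax m N + 1)

/-!
Give a set `b` the weight `t + 1 - |b|` (truncated at `0`) plus its size `|b|`: every member of
`B` then weighs at least `t + 1`. The sizes add up to at most `N`, and since at most `C(m,i)`
members have size `i`, the truncated weights add up to at most `Σ_{i ≤ t} (t + 1 - i) C(m,i)`,
which is `(t + 1) Σ_{i ≤ t} C(m,i) - Σ_{i ≤ t} i C(m,i)`. Dividing by `t + 1` gives the bound
for every `t`; `i_max` is merely the best choice.
-/

open Finset

theorem Nat.le_add_div_of_mul_add_le {x a s n k : ℕ} (hk : 0 < k)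
    (h : k * x + s ≤ k * a + n) : x ≤ a + (n - s) / k := by
  rcases le_or_gt x a with hxa | _
  · exact Nat.le_add_right_of_le hxa
  · have hdiff : (x - a) * k ≤ n - s := by
      have hx : x = a + (x - a) := by omega
      rw [hx, Nat.mul_add] at h
      rw [Nat.mul_comm]
      omega
    have := (Nat.le_div_iff_mul_le hk).2 hdiff
    omega

namespace Finset

variable {α : Type*} [Fintype α]

theorem card_filter_card_eq_le_choose (B : Finset (Finset α)) (i : ℕ) :
    #{b ∈ B | #b = i} ≤ (Fintype.card α).choose i := by
  rw [← card_univ, ← card_powersetCard]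
  exact card_le_card fun b hb => mem_powersetCard_univ.2 (mem_filter.1 hb).2

theorem sum_weight_card_le_sum_choose_mul {B : Finset (Finset α)} (hne : ∀ b ∈ B, b ≠ ∅)
    (w : ℕ → ℕ) {t : ℕ} (hw : ∀ i, t < i → w i = 0) :
    ∑ b ∈ B, w #b ≤ ∑ i ∈ Icc 1 t, (Fintype.card α).choose i * w i := by
  have hsupport : ∀ b ∈ B, w #b ≠ 0 → #b ∈ Icc 1 t := by
    intro b hb hwb
    have hpos : 0 < #b := card_pos.2 (nonempty_iff_ne_empty.2 (hne b hb))
    exact mem_Icc.2 ⟨hpos, not_lt.1 fun hlt => hwb (hw _ hlt)⟩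
  calc ∑ b ∈ B, w #b = ∑ b ∈ B with #b ∈ Icc 1 t, w #b := (sum_filter_of_ne hsupport).symm
    _ = ∑ i ∈ Icc 1 t, #{b ∈ B | #b = i} * w i := by
      rw [← sum_fiberwise_eq_sum_filter']
      simp only [sum_const, smul_eq_mul]
    _ ≤ ∑ i ∈ Icc 1 t, (Fintype.card α).choose i * w i :=
      sum_le_sum fun i _ => Nat.mul_le_mul_right _ (card_filter_card_eq_le_choose B i)

theorem sum_choose_mul_sub_add_sum_mul_choose (n t : ℕ) :
    ∑ i ∈ Icc 1 t, n.choose i * (t + 1 - i) + ∑ i ∈ Icc 1 t, i * n.choose i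
      = (t + 1) * ∑ i ∈ Icc 1 t, n.choose i := by
  rw [← sum_add_distrib, mul_sum]
  refine sum_congr rfl fun i hi => ?_
  have hit : i ≤ t + 1 := by linarith [(mem_Icc.1 hi).2]
  rw [Nat.mul_comm i, ← Nat.mul_add, Nat.sub_add_cancel hit, Nat.mul_comm]

theorem card_le_sum_choose_add_div {B : Finset (Finset α)} (hne : ∀ b ∈ B, b ≠ ∅) {N : ℕ}
    (hN : ∑ b ∈ B, #b ≤ N) (t : ℕ) :
    #B ≤ ∑ i ∈ Icc 1 t, (Fintype.card α).choose i +
      (N - ∑ i ∈ Icc 1 t, i * (Fintype.card α).choose i) / (t + 1) := by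
  have hweights := sum_weight_card_le_sum_choose_mul hne (fun i => t + 1 - i) (t := t)
    (fun i hi => by omega)
  have hsplit : (t + 1) * #B ≤ ∑ b ∈ B, (t + 1 - #b) + ∑ b ∈ B, #b := by
    rw [← sum_add_distrib, mul_comm, ← smul_eq_mul, ← sum_const]
    exact sum_le_sum fun b _ => by omega
  refine Nat.le_add_div_of_mul_add_le t.succ_pos ?_
  rw [← sum_choose_mul_sub_add_sum_mul_choose]
  omega

end Finset

/-- Any family `B` of pairwise distinct nonempty subsets of an `m`-element set with
total size `Σ_{b ∈ B} |b| ≤ N` satisfies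
`|B| ≤ Σ_{i=1}^{i_max} C(m,i) + ⌊(N − Σ_{i=1}^{i_max} i·C(m,i))/(i_max + 1)⌋`. -/
theorem card_le_boundFormula {m N : ℕ} (B : Finset (Finset (Fin m)))
    (hne : ∀ b ∈ B, b ≠ ∅) (hN : ∑ b ∈ B, b.card ≤ N) :
    B.card ≤ boundFormula m N := by
  simpa only [boundFormula, Fintype.card_fin] using card_le_sum_choose_add_div hne hN (imax m N)
end

section
/- For every m ≥ 1 and every assignment of path lengths d_1, …, d_m ≥ 1 that are balanced (|d_i − d_j| ≤ 1 for all i, j) and satisfy N := Σ_{i=1}^{m} d_i ≤ m·2^{m−1}, there exist a finite set V and monitoring paths P = (p_1, …, p_m) with p_i ⊆ V and |p_i| = d_i such that the number of identifiable nodes equals Σ_{i=1}^{i_max} C(m,i) + ⌊(N − Σ_{i=1}^{i_max} i·C(m,i))/(i_max + 1)⌋, where i_max = max{k ∈ ℕ : Σ_{i=1}^{k} i·C(m,i) ≤ N}. In other words, the arbitrary-routing upper bound on identifiability is achieved tightly. -/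
/-- The encoding of a node `v` w.r.t. monitoring paths `p`. -/
def encoding {V : Type*} [DecidableEq V] {m : ℕ} (p : Fin m → Finset V) (v : V) :
    Finset (Fin m) :=
  Finset.univ.filter fun i => v ∈ p i

/-- A node is identifiable iff its encoding is nonempty and distinct from the
encoding of every other node. -/
def Identifiable {V : Type*} [DecidableEq V] {m : ℕ} (p : Fin m → Finset V) (v : V) :
    Prop :=
  encoding p v ≠ ∅ ∧ ∀ w : V, w ≠ v → encoding p w ≠ encoding p v

/-!
A node is identifiable exactly when its encoding is a nonempty set of paths used by no other
node, so it suffices to find a family of distinct nonempty subsets of the `m` paths, as many as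
the bound, in which path `i` lies in exactly `d i` members. Take every set of size
`1, …, i_max`: by symmetry all paths get the same degree from these, and the balanced remainder
`R` is carried by `⌈R / (i_max + 1)⌉` sets of size `i_max + 1`, after removing one smaller set
from the layers to make up for the rounding; maximality of `i_max` (and `N ≤ m 2^(m-1)` when
`i_max = m`) leaves room for them. Distinct `j`-sets with any prescribed balanced degrees exist
by an exchange argument.
-/

open Finset

lemma Nat.exists_le_add_eq_mul (R k : ℕ) : ∃ Q h, h ≤ k ∧ R + h = Q * (k + 1) := by
  refine ⟨(R + k) / (k + 1), (R + k) / (k + 1) * (k + 1) - R, ?_⟩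
  have h1 := Nat.div_mul_le_self (R + k) (k + 1)
  have h2 := Nat.lt_div_mul_add (a := R + k) (b := k + 1) (by omega)
  omega

lemma Nat.div_add_ite_eq_of_add_eq_mul {R h Q k : ℕ} (hh : h ≤ k) (hR : R + h = Q * (k + 1)) :
    R / (k + 1) + (if h = 0 then 0 else 1) = Q := by
  split_ifs with h0
  · subst h0
    exact Nat.div_eq_of_eq_mul_left (by omega) hR
  · obtain ⟨Q, rfl⟩ : ∃ Q', Q = Q' + 1 := ⟨Q - 1, by cases Q <;> simp_all⟩
    rw [Nat.div_eq_of_lt_le (k := Q) (by rw [add_mul] at hR; omega) (by omega)]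

lemma Finset.exists_lt_of_sum_eq {ι M : Type*} [Fintype ι] [AddCommMonoid M] [LinearOrder M]
    [IsOrderedCancelAddMonoid M] {f g : ι → M} (h : ∑ i, f i = ∑ i, g i) {i : ι}
    (hi : f i ≠ g i) : ∃ j, f j < g j := by
  by_contra! hle
  exact hi ((sum_eq_sum_iff_of_le fun j _ => hle j).1 h.symm i (mem_univ i)).symm

namespace SetFamily

section Balanced

variable {ι : Type*}

def IsBalanced (f : ι → ℕ) : Prop := ∀ i j, f i ≤ f j + 1

variable [Fintype ι]

/-- Grow `H` one point at a time, always adding a point outside `H` of least `f`-value. -/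
lemma IsBalanced.exists_add_indicator [DecidableEq ι] {f : ι → ℕ} (hf : IsBalanced f)
    {h : ℕ} (hh : h ≤ Fintype.card ι) :
    ∃ H : Finset ι, #H = h ∧ IsBalanced fun i => f i + if i ∈ H then 1 else 0 := by
  induction h with
  | zero => exact ⟨∅, rfl, by simpa using hf⟩
  | succ h ih =>
    obtain ⟨H, hH, hbal⟩ := ih (by omega)
    have hne : Hᶜ.Nonempty := by
      rw [← card_pos, card_compl]
      omega
    obtain ⟨x, hx, hmin⟩ := exists_min_image Hᶜ f hne
    rw [mem_compl] at hx
    refine ⟨insert x H, by rw [card_insert_of_notMem hx, hH], fun a b => ?_⟩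
    have hab := hbal a b
    have hfx := hf x b
    have hxb : b ∉ H → f x ≤ f b := fun hb => hmin b (mem_compl.2 hb)
    by_cases hax : a = x <;> by_cases hbx : b = x <;> by_cases hbH : b ∈ H <;>
      simp_all
    all_goals omega

lemma IsBalanced.le_of_sum_le {d e : ι → ℕ} (hd : IsBalanced d) (he : ∀ i j, e i = e j)
    (hsum : ∑ i, e i ≤ ∑ i, d i) (i : ι) : e i ≤ d i := by
  by_contra! hlt
  have : ∑ j, d j < ∑ j, e j :=
    sum_lt_sum (fun j _ => by have := hd j i; have := he i j; omega) ⟨i, mem_univ i, hlt⟩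
  omega

end Balanced

variable {α : Type*}

section Degree

variable [DecidableEq α]

def degree (G : Finset (Finset α)) (i : α) : ℕ := #{S ∈ G | i ∈ S}

lemma degree_eq_sum (G : Finset (Finset α)) (i : α) :
    degree G i = ∑ S ∈ G, if i ∈ S then 1 else 0 :=
  card_filter _ _

lemma sum_degree [Fintype α] (G : Finset (Finset α)) : ∑ i, degree G i = ∑ S ∈ G, #S := by
  simp only [degree_eq_sum]
  rw [sum_comm]
  simp

lemma degree_union {G G' : Finset (Finset α)} (h : Disjoint G G') (i : α) :
    degree (G ∪ G') i = degree G i + degree G' i := by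
  simp only [degree_eq_sum, sum_union h]

lemma degree_erase_add {G : Finset (Finset α)} {S : Finset α} (hS : S ∈ G) (i : α) :
    degree (G.erase S) i + (if i ∈ S then 1 else 0) = degree G i := by
  simp only [degree_eq_sum, sum_erase_add _ _ hS]

lemma degree_insert {G : Finset (Finset α)} {T : Finset α} (hT : T ∉ G) (i : α) :
    degree (insert T G) i = degree G i + if i ∈ T then 1 else 0 := by
  simp only [degree_eq_sum, sum_insert hT, add_comm]

lemma degree_swap {G : Finset (Finset α)} {S T : Finset α} (hS : S ∈ G) (hT : T ∉ G)
    (i : α) :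
    degree (insert T (G.erase S)) i + (if i ∈ S then 1 else 0) =
      degree G i + if i ∈ T then 1 else 0 := by
  rw [degree_insert (fun h => hT (mem_of_mem_erase h)), ← degree_erase_add hS i]
  ring

lemma exists_exchange {E : Finset (Finset α)} {a b : α} (hlt : degree E b < degree E a) :
    ∃ S ∈ E, a ∈ S ∧ b ∉ S ∧ S.map (Equiv.swap a b).toEmbedding ∉ E := by
  by_contra! hE
  have hsplit (x y : α) :
      degree E x = #{S ∈ E | x ∈ S ∧ y ∉ S} + #{S ∈ E | x ∈ S ∧ y ∈ S} := by
    rw [degree, ← card_filter_add_card_filter_not (p := (y ∈ ·)), filter_filter,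
      filter_filter, add_comm]
  have hinj : #{S ∈ E | a ∈ S ∧ b ∉ S} ≤ #{S ∈ E | b ∈ S ∧ a ∉ S} := by
    refine card_le_card_of_injOn (fun S => S.map (Equiv.swap a b).toEmbedding) ?_
      (fun S _ S' _ h => map_injective _ h)
    intro S hS
    simp only [coe_filter, Set.mem_ofPred_eq] at hS ⊢
    obtain ⟨hSE, haS, hbS⟩ := hS
    simp [mem_map_equiv, hE S hSE haS hbS, haS, hbS]
  have ha := hsplit a b
  have hb := hsplit b a
  have hboth : #{S ∈ E | b ∈ S ∧ a ∈ S} = #{S ∈ E | a ∈ S ∧ b ∈ S} := by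
    simp only [and_comm]
  omega

lemma degree_exchange {E : Finset (Finset α)} {S : Finset α} {a b : α} (hS : S ∈ E)
    (ha : a ∈ S) (hb : b ∉ S) (hT : S.map (Equiv.swap a b).toEmbedding ∉ E) (i : α) :
    degree (insert (S.map (Equiv.swap a b).toEmbedding) (E.erase S)) i +
        (if i = a then 1 else 0) =
      degree E i + if i = b then 1 else 0 := by
  have key := degree_swap hS hT i
  have hab : a ≠ b := by rintro rfl; exact hb ha
  simp only [mem_map_equiv, Equiv.symm_swap] at key
  by_cases hia : i = a
  · subst hia; simp_all [Equiv.swap_apply_left]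
  by_cases hib : i = b
  · subst hib; simp_all [Equiv.swap_apply_right]
  · simp_all [Equiv.swap_apply_of_ne_of_ne hia hib]

/-- Among all families of `Q` distinct `j`-sets, one minimizing `∑ i, |degree E i - γ i|` has
degrees `γ`: otherwise some `a` is over-covered and some `b` under-covered, and an exchange of
`a` for `b` in one set decreases the potential. -/
theorem exists_sized_family_degree_eq [Fintype α] {j Q : ℕ}
    (hQ : Q ≤ (Fintype.card α).choose j) {γ : α → ℕ} (hγ : IsBalanced γ)
    (hsum : ∑ i, γ i = Q * j) :
    ∃ E : Finset (Finset α), #E = Q ∧ (E : Set (Finset α)).Sized j ∧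
      ∀ i, degree E i = γ i := by
  set 𝒮 := (powersetCard j (univ : Finset α)).powersetCard Q
  have hmem {E : Finset (Finset α)} : E ∈ 𝒮 ↔ (E : Set (Finset α)).Sized j ∧ #E = Q := by
    rw [mem_powersetCard, subset_powersetCard_univ_iff]
  have hne : 𝒮.Nonempty := by
    rwa [powersetCard_nonempty, card_powersetCard, card_univ]
  obtain ⟨E, hE, hmin⟩ :=
    exists_min_image 𝒮 (fun E => ∑ i, (degree E i).dist (γ i)) hne
  obtain ⟨hsized, hcard⟩ := hmem.1 hE
  refine ⟨E, hcard, hsized, ?_⟩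
  by_contra! ⟨i, hi⟩
  have hdeg : ∑ i, degree E i = ∑ i, γ i := by
    rw [sum_degree, sum_congr rfl fun S hS => hsized hS, sum_const, hcard, smul_eq_mul, hsum]
  obtain ⟨a, ha⟩ := exists_lt_of_sum_eq hdeg.symm hi.symm
  obtain ⟨b, hb⟩ := exists_lt_of_sum_eq hdeg hi
  obtain ⟨S, hS, haS, hbS, hT⟩ :=
    exists_exchange (E := E) (a := a) (b := b) (by have := hγ b a; omega)
  have hab : a ≠ b := by rintro rfl; omega
  have hx := degree_exchange hS haS hbS hT
  set T := S.map (Equiv.swap a b).toEmbedding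
  have hT' : T ∉ E.erase S := fun h => hT (mem_of_mem_erase h)
  have hE' : insert T (E.erase S) ∈ 𝒮 := by
    refine hmem.2 ⟨?_, ?_⟩
    · intro U hU
      rcases mem_insert.1 hU with rfl | hU
      · rw [card_map, hsized hS]
      · exact hsized (mem_of_mem_erase hU)
    · rw [card_insert_of_notMem hT', card_erase_add_one hS, hcard]
  refine (hmin _ hE').not_gt (sum_lt_sum (fun x _ => ?_) ⟨a, mem_univ a, ?_⟩) <;>
    simp only [Nat.dist]
  · rcases eq_or_ne x a with rfl | hxa
    · have := hx x; rw [if_pos rfl, if_neg hab] at this; omega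
    rcases eq_or_ne x b with rfl | hxb
    · have := hx x; rw [if_neg hxa, if_pos rfl] at this; omega
    · have := hx x; rw [if_neg hxa, if_neg hxb] at this; omega
  · have := hx a; rw [if_pos rfl, if_neg hab] at this; omega

end Degree

section Layers

variable (α) [Fintype α]

def layers (k : ℕ) : Finset (Finset α) := {S | 1 ≤ #S ∧ #S ≤ k}

variable {α}

lemma mem_layers {k : ℕ} {S : Finset α} : S ∈ layers α k ↔ 1 ≤ #S ∧ #S ≤ k := by
  simp [layers]

lemma sum_layers {M : Type*} [AddCommMonoid M] (k : ℕ) (g : ℕ → M) :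
    ∑ S ∈ layers α k, g #S = ∑ t ∈ Icc 1 k, (Fintype.card α).choose t • g t := by
  rw [← sum_fiberwise_of_maps_to (g := card) (t := Icc 1 k)
    fun S hS => mem_Icc.2 (mem_layers.1 hS)]
  refine sum_congr rfl fun t ht => ?_
  have hslice : {S ∈ layers α k | #S = t} = powersetCard t univ := by
    ext S
    rw [mem_filter, mem_layers, mem_powersetCard_univ, mem_Icc] at *
    constructor <;> intro h <;> [exact h.2; exact ⟨h ▸ ht, h⟩]
  rw [sum_congr rfl fun S hS => by rw [(mem_filter.1 hS).2], sum_const, hslice,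
    card_powersetCard, card_univ]

lemma degree_layers_eq [DecidableEq α] (k : ℕ) (i j : α) :
    degree (layers α k) i = degree (layers α k) j :=
  card_equiv (Equiv.swap i j).finsetCongr fun S => by
    simp [Equiv.finsetCongr_apply, mem_layers, mem_map_equiv]

lemma degree_erase_layers [DecidableEq α] {k : ℕ} {H : Finset α} (hH : #H ≤ k) (i : α) :
    degree ((layers α k).erase H) i + (if i ∈ H then 1 else 0) = degree (layers α k) i := by
  rcases H.eq_empty_or_nonempty with rfl | hne
  · rw [erase_eq_of_notMem (by simp [mem_layers])]
    simp
  · exact degree_erase_add (mem_layers.2 ⟨hne.card_pos, hH⟩) i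

lemma card_erase_layers [DecidableEq α] {k : ℕ} {H : Finset α} (hH : #H ≤ k) :
    #((layers α k).erase H) + (if #H = 0 then 0 else 1) =
      ∑ t ∈ Icc 1 k, (Fintype.card α).choose t := by
  have hL : #(layers α k) = ∑ t ∈ Icc 1 k, (Fintype.card α).choose t := by
    rw [card_eq_sum_ones, sum_layers k fun _ => 1]
    simp
  split_ifs with h
  · rw [card_eq_zero.1 h, erase_eq_of_notMem (by simp [mem_layers]), hL, add_zero]
  · rw [card_erase_add_one (mem_layers.2 ⟨by omega, hH⟩), hL]

end Layers

/-- The layers minus a set `H` of size `h` (empty when `h = 0`), plus `Q` sets of size `k + 1`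
that also cover the points of `H` once more; `H` is chosen so that the degrees asked of the
`(k + 1)`-sets stay balanced. -/
theorem exists_family_degree_eq_layers_add [Fintype α] [DecidableEq α] {k Q h : ℕ}
    {δ : α → ℕ} (hδ : IsBalanced δ) (hh : h ≤ k) (hsum : ∑ i, δ i + h = Q * (k + 1))
    (hQ : Q ≤ (Fintype.card α).choose (k + 1)) :
    ∃ G : Finset (Finset α), ∅ ∉ G ∧
      (∀ i, degree G i = degree (layers α k) i + δ i) ∧
      #G + (if h = 0 then 0 else 1) = ∑ t ∈ Icc 1 k, (Fintype.card α).choose t + Q := by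
  have hhn : h ≤ Fintype.card α := by
    rcases Nat.eq_zero_or_pos h with rfl | hpos
    · exact Nat.zero_le _
    have hQpos : 0 < Q := Nat.pos_of_ne_zero (by rintro rfl; omega)
    have := Nat.choose_eq_zero_iff.not.1 (by omega : (Fintype.card α).choose (k + 1) ≠ 0)
    omega
  obtain ⟨H, hH, hHbal⟩ := hδ.exists_add_indicator hhn
  obtain ⟨E, hEcard, hEsized, hEdeg⟩ := exists_sized_family_degree_eq hQ hHbal (by
    rw [sum_add_distrib, sum_boole, filter_mem_eq_inter, univ_inter, hH, Nat.cast_id, hsum])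
  have hdisj : Disjoint ((layers α k).erase H) E :=
    disjoint_right.2 fun S hS hL => by
      have := (mem_layers.1 (mem_of_mem_erase hL)).2
      rw [hEsized hS] at this
      omega
  refine ⟨(layers α k).erase H ∪ E, fun h0 => ?_, fun i => ?_, ?_⟩
  · rcases mem_union.1 h0 with h0 | h0
    · simpa [mem_layers] using mem_of_mem_erase h0
    · simpa using hEsized h0
  · rw [degree_union hdisj, hEdeg, ← degree_erase_layers (hH ▸ hh) i]
    ring
  · rw [card_union_of_disjoint hdisj, hEcard, ← card_erase_layers (hH ▸ hh), hH]
    ring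

theorem exists_family_degree_eq [Fintype α] [DecidableEq α] {k R : ℕ} {d : α → ℕ}
    (hd : IsBalanced d) (hsum : ∑ i, d i = ∑ t ∈ Icc 1 k, t * (Fintype.card α).choose t + R)
    (hR : R ≤ (k + 1) * (Fintype.card α).choose (k + 1)) :
    ∃ G : Finset (Finset α), ∅ ∉ G ∧ (∀ i, degree G i = d i) ∧
      #G = ∑ t ∈ Icc 1 k, (Fintype.card α).choose t + R / (k + 1) := by
  have hL : ∑ i, degree (layers α k) i = ∑ t ∈ Icc 1 k, t * (Fintype.card α).choose t := by
    rw [sum_degree, sum_layers k fun t => t]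
    simp [mul_comm]
  have hLd : ∀ i, degree (layers α k) i ≤ d i :=
    hd.le_of_sum_le (degree_layers_eq k) (by omega)
  obtain ⟨Q, h, hh, hRQ⟩ := Nat.exists_le_add_eq_mul R k
  have hQ : Q ≤ (Fintype.card α).choose (k + 1) := by
    have : Q * (k + 1) < ((Fintype.card α).choose (k + 1) + 1) * (k + 1) := by nlinarith
    exact Nat.lt_succ_iff.1 (Nat.lt_of_mul_lt_mul_right this)
  have hδ : IsBalanced fun i => d i - degree (layers α k) i := fun i j => by
    beta_reduce
    have := hd i j; have := degree_layers_eq k i j; have := hLd i; omega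
  obtain ⟨G, hG0, hGdeg, hGcard⟩ := exists_family_degree_eq_layers_add hδ hh
    (by rw [sum_tsub_distrib _ fun i _ => hLd i, hL, hsum]; omega) hQ
  refine ⟨G, hG0, fun i => by rw [hGdeg]; have := hLd i; omega, ?_⟩
  have := Nat.div_add_ite_eq_of_add_eq_mul hh hRQ
  omega

end SetFamily

open SetFamily

theorem exists_paths_identifiable_ncard_eq {m : ℕ} (G : Finset (Finset (Fin m)))
    (hG : ∅ ∉ G) :
    ∃ (V : Type) (_ : Fintype V) (instDE : DecidableEq V) (p : Fin m → Finset V),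
      (∀ i, (p i).card = degree G i) ∧ {v : V | @Identifiable V instDE m p v}.ncard = #G := by
  set p : Fin m → Finset G := fun i => {S ∈ G | i ∈ S}.subtype (· ∈ G)
  have henc (v : G) : encoding p v = v.1 := by
    ext i
    simp [p, encoding, mem_subtype, v.2]
  have hall : {v : G | Identifiable p v} = Set.univ :=
    Set.eq_univ_of_forall fun v => ⟨by rw [henc]; exact fun h => hG (h ▸ v.2),
      fun w hw h => hw (Subtype.ext (by rwa [henc, henc] at h))⟩
  refine ⟨G, inferInstance, inferInstance, p, fun i => ?_, ?_⟩
  · rw [card_subtype, filter_true_of_mem fun S hS => (mem_filter.1 hS).1, degree]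
  · rw [hall, Set.ncard_univ, Nat.card_eq_fintype_card, Fintype.card_coe]

lemma Nat.sum_Icc_mul_choose (m : ℕ) : ∑ i ∈ Icc 1 m, i * m.choose i = m * 2 ^ (m - 1) := by
  rw [← Nat.sum_range_mul_choose, range_eq_Ico, sum_eq_sum_Ico_succ_bot (by omega), zero_add,
    Ico_add_one_right_eq_Icc, zero_mul, zero_add]

lemma sum_mul_choose_imax_le (m N : ℕ) : ∑ i ∈ Icc 1 (imax m N), i * m.choose i ≤ N :=
  Nat.findGreatest_spec (P := fun k => ∑ i ∈ Icc 1 k, i * m.choose i ≤ N) (Nat.zero_le m)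
    (by simp)

lemma sub_sum_mul_choose_imax_le {m N : ℕ} (hN : N ≤ m * 2 ^ (m - 1)) :
    N - ∑ i ∈ Icc 1 (imax m N), i * m.choose i ≤
      (imax m N + 1) * m.choose (imax m N + 1) := by
  have hle : imax m N ≤ m := Nat.findGreatest_le m
  rcases hle.lt_or_eq with hlt | heq
  · have hnext := Nat.findGreatest_is_greatest
      (P := fun k => ∑ i ∈ Icc 1 k, i * m.choose i ≤ N) (Nat.lt_succ_self (imax m N)) hlt
    rw [not_le, sum_Icc_succ_top (by omega)] at hnext
    omega
  · rw [heq, Nat.sum_Icc_mul_choose]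
    omega

theorem arbitrary_routing_bound_tight_general {m : ℕ} (d : Fin m → ℕ)
    (hbal : ∀ i j, d i ≤ d j + 1)
    (hN : ∑ i, d i ≤ m * 2 ^ (m - 1)) :
    ∃ (V : Type) (_ : Fintype V) (instDE : DecidableEq V) (p : Fin m → Finset V),
      (∀ i, (p i).card = d i) ∧
      {v : V | @Identifiable V instDE m p v}.ncard = boundFormula m (∑ i, d i) := by
  obtain ⟨G, hG0, hGdeg, hGcard⟩ := exists_family_degree_eq (k := imax m (∑ i, d i)) hbal
    (by rw [Fintype.card_fin, Nat.add_sub_of_le (sum_mul_choose_imax_le m _)])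
    (by rw [Fintype.card_fin]; exact sub_sum_mul_choose_imax_le hN)
  obtain ⟨V, hV, instDE, p, hp, hcard⟩ := exists_paths_identifiable_ncard_eq G hG0
  refine ⟨V, hV, instDE, p, fun i => (hp i).trans (hGdeg i), ?_⟩
  rw [hcard, hGcard, Fintype.card_fin, boundFormula]

/-- Tightness of the arbitrary-routing bound (Proposition IV.2): for every `m ≥ 1`
and balanced path lengths `d_1, …, d_m ≥ 1` with `N = Σ d_i ≤ m·2^(m−1)`, there
exist a finite node set `V` and monitoring paths `p_i ⊆ V` with `|p_i| = d_i`
whose number of identifiable nodes equals the bound `boundFormula m N`. -/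
theorem arbitrary_routing_bound_tight {m : ℕ} (hm : 1 ≤ m) (d : Fin m → ℕ)
    (hd : ∀ i, 1 ≤ d i) (hbal : ∀ i j, d i ≤ d j + 1)
    (hN : ∑ i, d i ≤ m * 2 ^ (m - 1)) :
    ∃ (V : Type) (_ : Fintype V) (instDE : DecidableEq V) (p : Fin m → Finset V),
      (∀ i, (p i).card = d i) ∧
      {v : V | @Identifiable V instDE m p v}.ncard = boundFormula m (∑ i, d i) :=
  arbitrary_routing_bound_tight_general d hbal hN
end

section
/- Under consistent routing, every column of every path matrix has consecutive ones: for any two paths p_i and p_j of a consistent set of paths, and for any positions a ≤ h ≤ b on p_i, if the nodes in positions a and b of p_i both appear on p_j, then the node in position h of p_i also appears on p_j. -/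
/-- The contiguous segment of the list `l` between (the first occurrences of) the
nodes `u` and `w`, inclusive, taken in the order of `l`. -/
def seg {V : Type*} [DecidableEq V] (l : List V) (u w : V) : List V :=
  (l.drop (min (l.idxOf u) (l.idxOf w))).take
    (max (l.idxOf u) (l.idxOf w) - min (l.idxOf u) (l.idxOf w) + 1)

/-- Two paths are consistent if, for any two nodes `u, w` appearing on both, the
contiguous segment of one between `u` and `w` equals, up to reversal, the
contiguous segment of the other between `u` and `w`. -/
def ConsistentPair {V : Type*} [DecidableEq V] (l l' : List V) : Prop :=
  ∀ u w : V, u ∈ l → w ∈ l → u ∈ l' → w ∈ l' →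
    seg l u w = seg l' u w ∨ seg l u w = (seg l' u w).reverse

/-- A family of paths is consistent if every two of its paths are consistent. -/
def Consistent {V : Type*} [DecidableEq V] {ι : Type*} (p : ι → List V) : Prop :=
  ∀ i j, ConsistentPair (p i) (p j)

/-! On a duplicate-free path the segment between the nodes at positions `a ≤ c` is the
slice of positions `a, …, c`, so it contains every node in between; consistency makes that
slice, up to reversal, a segment of the other path, hence a sublist of it. -/

section Segment

variable {V : Type*} [DecidableEq V]

theorem mem_of_mem_seg {l : List V} {u w x : V} (hx : x ∈ seg l u w) : x ∈ l :=
  List.mem_of_mem_drop (List.mem_of_mem_take hx)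

theorem seg_getElem_getElem {l : List V} (hl : l.Nodup) {a c : ℕ} (hac : a ≤ c)
    (hc : c < l.length) :
    seg l l[a] l[c] = (l.drop a).take (c - a + 1) := by
  rw [seg, hl.idxOf_getElem, hl.idxOf_getElem, min_eq_left hac, max_eq_right hac]

theorem getElem_mem_seg {l : List V} (hl : l.Nodup) {a h c : ℕ} (hah : a ≤ h) (hhc : h ≤ c)
    (hc : c < l.length) :
    l[h] ∈ seg l l[a] l[c] := by
  rw [seg_getElem_getElem hl (hah.trans hhc) hc, List.mem_take_iff_getElem]
  exact ⟨h - a, by simp only [List.length_drop]; omega,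
    by simp only [List.getElem_drop]; congr 1; omega⟩

theorem ConsistentPair.mem_right_of_mem_seg {l l' : List V} (hll' : ConsistentPair l l') {u w x : V}
    (hul : u ∈ l) (hwl : w ∈ l) (hul' : u ∈ l') (hwl' : w ∈ l') (hx : x ∈ seg l u w) :
    x ∈ l' := by
  rcases hll' u w hul hwl hul' hwl' with heq | heq
  · exact mem_of_mem_seg (heq ▸ hx)
  · exact mem_of_mem_seg (List.mem_reverse.mp (heq ▸ hx))

end Segment

/-- Consecutive-ones property (Lemma IV.6): under consistent routing, for any two
paths `p i`, `p j` and positions `a ≤ h ≤ c` on `p i`, if the nodes at positions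
`a` and `c` of `p i` both appear on `p j`, then so does the node at position `h`. -/
theorem consecutive_ones {V : Type*} [DecidableEq V] {m : ℕ} (p : Fin m → List V)
    (hnodup : ∀ i, (p i).Nodup) (hcons : Consistent p)
    (i j : Fin m) (a h c : ℕ) (hc : c < (p i).length) (hah : a ≤ h) (hhc : h ≤ c)
    (ha : (p i).get ⟨a, lt_of_le_of_lt (hah.trans hhc) hc⟩ ∈ p j)
    (hb : (p i).get ⟨c, hc⟩ ∈ p j) :
    (p i).get ⟨h, lt_of_le_of_lt hhc hc⟩ ∈ p j :=
  (hcons i j).mem_right_of_mem_seg (List.get_mem _ _) (List.get_mem _ _) ha hb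
    (getElem_mem_seg (hnodup i) hah hhc hc)
end

section
/- Let P = (p_1, …, p_m) be a consistent set of monitoring paths all having the same final node r (a common endpoint). Then the simple graph whose vertex set is the set of nodes appearing on at least one path, and in which two nodes are adjacent if and only if they occur in consecutive positions on some path p_i, is a tree (connected and acyclic) containing r. -/
/-- The simple graph whose vertices are the nodes appearing on at least one of the
paths, two nodes being adjacent iff they occur in consecutive positions on some
path. -/
def pathGraph {V : Type*} {m : ℕ} (p : Fin m → List V) :
    SimpleGraph {v : V // ∃ i, v ∈ p i} where
  Adj x y := x ≠ y ∧ ∃ i, [x.1, y.1] <:+: p i ∨ [y.1, x.1] <:+: p i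
  symm := by
    constructor
    rintro x y ⟨hxy, i, h⟩
    exact ⟨hxy.symm, i, h.symm⟩
  loopless := by
    constructor
    rintro x ⟨hx, -⟩
    exact hx rfl

/-
Following a path from a node `v` to the common endpoint `r` gives a list which, by consistency
applied to the pair `v, r`, does not depend on the path: call it the route of `v`. Every edge
`x y` of the path graph, with `x` before `y` on some path, satisfies `route x = x :: route y`.
Hence every node other than `r` has a neighbour with a shorter route, which makes the graph
connected; and every node `v` has at most one neighbour whose route is not longer than that of
`v`, which rules out cycles: on a cycle, the node with the longest route would have two such
neighbours.
-/

namespace SimpleGraph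

variable {α β : Type*} {G : SimpleGraph α}

theorem reachable_of_exists_adj_lt [Preorder β] [WellFoundedLT β] (f : α → β) {r : α}
    (h : ∀ v, v ≠ r → ∃ w, G.Adj v w ∧ f w < f v) (v : α) : G.Reachable v r := by
  induction hv : f v using WellFoundedLT.induction generalizing v with
  | _ b ih =>
    by_cases hvr : v = r
    · exact hvr ▸ Reachable.refl v
    · obtain ⟨w, hvw, hlt⟩ := h v hvr
      exact hvw.reachable.trans (ih (f w) (hv ▸ hlt) w rfl)

theorem isAcyclic_of_subsingleton_adj_le [LinearOrder β] (f : α → β)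
    (h : ∀ v, {w | G.Adj v w ∧ f w ≤ f v}.Subsingleton) : G.IsAcyclic := by
  classical
  intro u c hc
  obtain ⟨v, hv, hmax⟩ := c.support.toFinset.exists_max_image f ⟨u, by simp⟩
  rw [List.mem_toFinset] at hv
  set d := c.rotate v hv
  have hd : d.IsCycle := hc.rotate hv
  have hle : ∀ w ∈ d.support, f w ≤ f v := fun w hw ↦
    hmax w (List.mem_toFinset.mpr ((c.mem_support_rotate_iff v hv).mp hw))
  exact hd.snd_ne_penultimate <| h v
    ⟨d.adj_snd hd.not_nil, hle _ (d.getVert_mem_support 1)⟩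
    ⟨(d.adj_penultimate hd.not_nil).symm, hle _ (d.getVert_mem_support _)⟩

end SimpleGraph

namespace List

variable {V : Type*} [DecidableEq V] {l l' : List V} {r v : V}

theorem drop_idxOf_append_cons {s t : List V} (h : (s ++ v :: t).Nodup) :
    (s ++ v :: t).drop ((s ++ v :: t).idxOf v) = v :: t := by
  have hv : v ∉ s := fun hs ↦ (nodup_append.mp h).2.2 v hs v mem_cons_self rfl
  rw [idxOf_append_of_notMem hv, idxOf_cons_self, Nat.add_zero, drop_left]

theorem drop_idxOf_of_getLast? (hl : l.Nodup) (hr : l.getLast? = some r) :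
    l.drop (l.idxOf r) = [r] := by
  obtain ⟨s, rfl⟩ := getLast?_eq_some_iff.mp hr
  exact drop_idxOf_append_cons hl

theorem seg_eq_drop_idxOf (hl : l.Nodup) (hr : l.getLast? = some r) (hv : v ∈ l) :
    seg l v r = l.drop (l.idxOf v) := by
  have hvl : l.idxOf v < l.length := idxOf_lt_length_iff.mpr hv
  have hrl : l.idxOf r = l.length - 1 := by
    obtain ⟨s, rfl⟩ := getLast?_eq_some_iff.mp hr
    have hrs : r ∉ s := fun hs ↦ (nodup_append.mp hl).2.2 r hs r (mem_singleton_self r) rfl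
    simp [idxOf_append_of_notMem hrs]
  rw [seg, hrl, min_eq_left (by omega), max_eq_right (by omega)]
  exact take_of_length_le (by rw [length_drop]; omega)

/-- The reversed alternative of `ConsistentPair` for the pair `v, r` can only occur if `v = r`. -/
theorem drop_idxOf_eq_of_consistentPair (h : ConsistentPair l l') (hl : l.Nodup)
    (hl' : l'.Nodup) (hr : l.getLast? = some r) (hr' : l'.getLast? = some r) (hv : v ∈ l)
    (hv' : v ∈ l') : l.drop (l.idxOf v) = l'.drop (l'.idxOf v) := by
  rcases h v r hv (mem_of_getLast? hr) hv' (mem_of_getLast? hr') with h | h <;>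
    rw [seg_eq_drop_idxOf hl hr hv, seg_eq_drop_idxOf hl' hr' hv'] at h
  · exact h
  · have hvr : some v = some r := by
      rw [← getElem_idxOf (idxOf_lt_length_iff.mpr hv), ← getElem?_eq_getElem, ← head?_drop, h,
        head?_reverse, getLast?_drop, if_neg (not_le.mpr (idxOf_lt_length_iff.mpr hv')), hr']
    cases Option.some_injective _ hvr
    rw [drop_idxOf_of_getLast? hl hr, drop_idxOf_of_getLast? hl' hr']

end List

namespace pathGraph

variable {V : Type*} [DecidableEq V] {m : ℕ} {p : Fin m → List V} {r : V}

/-- By `route_eq_drop`, every path through `v` gives the same list. -/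
noncomputable def route (p : Fin m → List V) (v : {v : V // ∃ i, v ∈ p i}) : List V :=
  (p v.2.choose).drop ((p v.2.choose).idxOf v.1)

theorem route_eq_drop (hnodup : ∀ i, (p i).Nodup) (hcons : Consistent p)
    (hlast : ∀ i, (p i).getLast? = some r) (v : {v : V // ∃ i, v ∈ p i}) {i : Fin m}
    (hv : v.1 ∈ p i) : route p v = (p i).drop ((p i).idxOf v.1) :=
  List.drop_idxOf_eq_of_consistentPair (hcons _ i) (hnodup _) (hnodup i) (hlast _) (hlast i)
    v.2.choose_spec hv

theorem route_eq_cons (v : {v : V // ∃ i, v ∈ p i}) :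
    route p v = v.1 :: (p v.2.choose).drop ((p v.2.choose).idxOf v.1 + 1) := by
  have hv := List.idxOf_lt_length_iff.mpr v.2.choose_spec
  rw [route, List.drop_eq_getElem_cons hv, List.getElem_idxOf]

theorem route_getLast? (hlast : ∀ i, (p i).getLast? = some r) (v : {v : V // ∃ i, v ∈ p i}) :
    (route p v).getLast? = some r := by
  rw [route, List.getLast?_drop,
    if_neg (not_le.mpr (List.idxOf_lt_length_iff.mpr v.2.choose_spec)), hlast]

theorem route_eq_cons_route_of_infix (hnodup : ∀ i, (p i).Nodup) (hcons : Consistent p)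
    (hlast : ∀ i, (p i).getLast? = some r) {x y : {v : V // ∃ i, v ∈ p i}} {i : Fin m}
    (h : [x.1, y.1] <:+: p i) : route p x = x.1 :: route p y := by
  obtain ⟨s, t, hst⟩ := h
  have hx : s ++ x.1 :: y.1 :: t = p i := by simpa using hst
  have hy : (s ++ [x.1]) ++ y.1 :: t = p i := by simpa using hst
  have hxi : x.1 ∈ p i := hx ▸ by simp
  have hyi : y.1 ∈ p i := hy ▸ by simp
  rw [route_eq_drop hnodup hcons hlast x hxi, ← hx, List.drop_idxOf_append_cons (hx ▸ hnodup i),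
    route_eq_drop hnodup hcons hlast y hyi, ← hy,
    List.drop_idxOf_append_cons (hy ▸ hnodup i)]

theorem exists_adj_route_length_lt (hnodup : ∀ i, (p i).Nodup) (hcons : Consistent p)
    (hlast : ∀ i, (p i).getLast? = some r) {v : {v : V // ∃ i, v ∈ p i}} (hv : v.1 ≠ r) :
    ∃ w, (pathGraph p).Adj v w ∧ (route p w).length < (route p v).length := by
  have hsuffix : route p v <:+ p v.2.choose := List.drop_suffix _ _
  have hroute := route_eq_cons v
  generalize (p v.2.choose).drop ((p v.2.choose).idxOf v.1 + 1) = t at hroute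
  cases t with
  | nil =>
    have := route_getLast? hlast v
    simp only [hroute, List.getLast?_singleton, Option.some_inj] at this
    exact absurd this hv
  | cons u t =>
    rw [hroute] at hsuffix
    have hvu : [v.1, u] <:+: p v.2.choose :=
      (List.prefix_append [v.1, u] t).isInfix.trans hsuffix.isInfix
    let w : {v : V // ∃ i, v ∈ p i} := ⟨u, v.2.choose, hvu.subset (by simp)⟩
    have hne : v.1 ≠ u := fun h ↦
      (List.nodup_cons.mp (hsuffix.sublist.nodup (hnodup _))).1 (by simp [h])
    refine ⟨w, ⟨fun h ↦ hne (congrArg Subtype.val h), _, Or.inl hvu⟩, ?_⟩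
    rw [route_eq_cons_route_of_infix hnodup hcons hlast (y := w) hvu]
    exact Nat.lt_succ_self _

theorem route_eq_cons_route_of_adj (hnodup : ∀ i, (p i).Nodup) (hcons : Consistent p)
    (hlast : ∀ i, (p i).getLast? = some r) {v w : {v : V // ∃ i, v ∈ p i}}
    (hvw : (pathGraph p).Adj v w) (hle : (route p w).length ≤ (route p v).length) :
    route p v = v.1 :: route p w := by
  obtain ⟨-, i, h | h⟩ := hvw
  · exact route_eq_cons_route_of_infix hnodup hcons hlast h
  · have := congrArg List.length (route_eq_cons_route_of_infix hnodup hcons hlast h)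
    simp only [List.length_cons] at this
    omega

theorem subsingleton_adj_route_length_le (hnodup : ∀ i, (p i).Nodup) (hcons : Consistent p)
    (hlast : ∀ i, (p i).getLast? = some r) (v : {v : V // ∃ i, v ∈ p i}) :
    {w | (pathGraph p).Adj v w ∧ (route p w).length ≤ (route p v).length}.Subsingleton := by
  rintro w₁ ⟨hadj₁, hle₁⟩ w₂ ⟨hadj₂, hle₂⟩
  have h := (route_eq_cons_route_of_adj hnodup hcons hlast hadj₁ hle₁).symm.trans
    (route_eq_cons_route_of_adj hnodup hcons hlast hadj₂ hle₂)
  have := congrArg List.head? (List.cons_injective h)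
  rw [route_eq_cons w₁, route_eq_cons w₂] at this
  exact Subtype.ext (Option.some_injective _ this)

end pathGraph

/-- Lemma V.1: consistent monitoring paths sharing a common final endpoint `r` span
a tree containing `r`. -/
theorem pathGraph_isTree {V : Type*} [DecidableEq V] {m : ℕ} (hm : 0 < m)
    (p : Fin m → List V) (r : V) (hnodup : ∀ i, (p i).Nodup)
    (hcons : Consistent p) (hlast : ∀ i, (p i).getLast? = some r) :
    (∃ i, r ∈ p i) ∧ (pathGraph p).IsTree := by
  have hr : ∃ i, r ∈ p i := ⟨⟨0, hm⟩, List.mem_of_getLast? (hlast _)⟩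
  refine ⟨hr, ?_, ?_⟩
  · refine (SimpleGraph.connected_iff_exists_forall_reachable _).mpr ⟨⟨r, hr⟩, fun v ↦ ?_⟩
    refine (SimpleGraph.reachable_of_exists_adj_lt (fun v ↦ (pathGraph.route p v).length)
      (fun w hw ↦ ?_) v).symm
    exact pathGraph.exists_adj_route_length_lt hnodup hcons hlast fun h ↦ hw (Subtype.ext h)
  · exact SimpleGraph.isAcyclic_of_subsingleton_adj_le (fun v ↦ (pathGraph.route p v).length)
      (pathGraph.subsingleton_adj_route_length_le hnodup hcons hlast)
end
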